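/- arXiv:1102.2335 — 3 statements merged into one kernel-verified Lean document; each statement's English description precedes it below -/
import Mathlib

section
/- Let Q(z, \bar z) be a real-valued polynomial in one complex variable z of the form Q = Σ_{j,k>0, j+k ≤ 2m} a_{jk} z^j \bar z^k (no harmonic terms) which is subharmonic on ℂ and homogeneous of degree 2m. If Q is not identically zero, then Q(z,\bar z) ≥ 0 cannot fail on all of ℂ ∖ {0}; indeed the coefficient of |z|^{2m} satisfies a_{mm} ≥ 0, and if Q(z) = c|z|^{2m} then c > 0 whenever Q is subharmonic and nonzero. -/
/-!
On the circle `z = r e^{iθ}` the monomial `z^j \bar z^k` equals `r^{j+k} e^{i(j-k)θ}`, so its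
mean over the circle vanishes unless `j = k`. Hence the mean of `Q` over the circle of radius `r`
about `0` is `(Re a_{mm}) r^{2m}`, and the sub-mean value inequality at `0`, where `Q` vanishes,
gives `a_{mm} ≥ 0`. The same inequality forbids `Q < 0` on the whole unit circle, and a
nonzero `c |z|^{2m}` that is somewhere nonnegative has `c > 0`.
-/

open Complex ComplexConjugate Finset intervalIntegral

lemma integral_exp_int_mul_I_eq_zero {n : ℤ} (hn : n ≠ 0) :
    ∫ θ in (0 : ℝ)..(2 * Real.pi), exp (n * I * θ) = 0 := by
  have hc : (n : ℂ) * I ≠ 0 := by simp [I_ne_zero, hn]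
  have hperiod : exp (n * I * (2 * Real.pi)) = 1 := by
    rw [show (n : ℂ) * I * (2 * Real.pi) = n * (2 * Real.pi * I) by ring]
    exact exp_int_mul_two_pi_mul_I n
  simp [integral_exp_mul_complex hc, hperiod]

lemma circle_pow_mul_conj_pow (r θ : ℝ) (j k : ℕ) :
    ((r : ℂ) * exp (θ * I)) ^ j * conj ((r : ℂ) * exp (θ * I)) ^ k
      = (r : ℂ) ^ (j + k) * exp (((j - k : ℤ) : ℂ) * I * θ) := by
  have hconj : conj ((r : ℂ) * exp (θ * I)) = r * exp (-(θ * I)) := by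
    rw [map_mul, conj_ofReal, ← exp_conj, map_mul, conj_ofReal, conj_I, mul_neg]
  rw [hconj, mul_pow, mul_pow, ← exp_nat_mul, ← exp_nat_mul, pow_add]
  calc (r : ℂ) ^ j * exp (j * (θ * I)) * ((r : ℂ) ^ k * exp (k * -(θ * I)))
      = (r : ℂ) ^ j * (r : ℂ) ^ k * (exp (j * (θ * I)) * exp (k * -(θ * I))) := by ring
    _ = (r : ℂ) ^ j * (r : ℂ) ^ k * exp (((j - k : ℤ) : ℂ) * I * θ) := by
      rw [← exp_add]; push_cast; ring_nf

lemma integral_circle_pow_mul_conj_pow (r : ℝ) (j k : ℕ) :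
    ∫ θ in (0 : ℝ)..(2 * Real.pi),
        ((r : ℂ) * exp (θ * I)) ^ j * conj ((r : ℂ) * exp (θ * I)) ^ k
      = if j = k then 2 * Real.pi * (r : ℂ) ^ (j + k) else 0 := by
  simp_rw [circle_pow_mul_conj_pow, integral_const_mul]
  split_ifs with hjk
  · simp [hjk, mul_comm]
  · rw [integral_exp_int_mul_I_eq_zero (by omega), mul_zero]

lemma integral_circle_homogeneous {m : ℕ} (hm : 0 < m) (a : ℕ → ℕ → ℂ) (r : ℝ) :
    ∫ θ in (0 : ℝ)..(2 * Real.pi), ∑ j ∈ Ioo 0 (2 * m),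
        a j (2 * m - j) * ((r : ℂ) * exp (θ * I)) ^ j * conj ((r : ℂ) * exp (θ * I)) ^ (2 * m - j)
      = 2 * Real.pi * a m m * (r : ℂ) ^ (2 * m) := by
  rw [integral_finsetSum fun j _ => by apply Continuous.intervalIntegrable; fun_prop]
  simp_rw [mul_assoc, integral_const_mul, integral_circle_pow_mul_conj_pow]
  rw [sum_congr rfl fun j _ => by
      rw [if_congr (by omega : j = 2 * m - j ↔ j = m) rfl rfl, mul_ite, mul_zero],
    sum_ite_eq' _ m, if_pos (mem_Ioo.mpr (by omega)), show 2 * m - m = m by omega,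
    ← two_mul]
  ring

section

variable {m : ℕ} {a : ℕ → ℕ → ℂ} {Q : ℂ → ℝ}

lemma continuous_of_eq_sum
    (hQ : ∀ z : ℂ, (Q z : ℂ) =
      ∑ j ∈ Ioo 0 (2 * m), a j (2 * m - j) * z ^ j * conj z ^ (2 * m - j)) :
    Continuous Q := by
  have hcont : Continuous fun z : ℂ =>
      (∑ j ∈ Ioo 0 (2 * m), a j (2 * m - j) * z ^ j * conj z ^ (2 * m - j)).re := by
    fun_prop
  exact hcont.congr fun z => by rw [← hQ z, ofReal_re]

lemma apply_zero_of_eq_sum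
    (hQ : ∀ z : ℂ, (Q z : ℂ) =
      ∑ j ∈ Ioo 0 (2 * m), a j (2 * m - j) * z ^ j * conj z ^ (2 * m - j)) :
    Q 0 = 0 := by
  have h := hQ 0
  rw [sum_eq_zero fun j hj => by rw [zero_pow (mem_Ioo.mp hj).1.ne', mul_zero, zero_mul]] at h
  exact_mod_cast h

lemma integral_circle_of_eq_sum (hm : 0 < m)
    (hQ : ∀ z : ℂ, (Q z : ℂ) =
      ∑ j ∈ Ioo 0 (2 * m), a j (2 * m - j) * z ^ j * conj z ^ (2 * m - j)) (r : ℝ) :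
    ∫ θ in (0 : ℝ)..(2 * Real.pi), Q (r * exp (θ * I))
      = 2 * Real.pi * (a m m).re * r ^ (2 * m) := by
  have h : ((∫ θ in (0 : ℝ)..(2 * Real.pi), Q (r * exp (θ * I)) : ℝ) : ℂ)
      = ((2 * Real.pi * r ^ (2 * m) : ℝ) : ℂ) * a m m := by
    rw [← integral_ofReal]
    simp_rw [hQ]
    rw [integral_circle_homogeneous hm]
    push_cast; ring
  rw [← ofReal_re (∫ θ in (0 : ℝ)..(2 * Real.pi), Q (r * exp (θ * I))), h, re_ofReal_mul]
  ring

end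

lemma exists_ne_zero_nonneg_of_integral_circle_nonneg {f : ℂ → ℝ} (hf : Continuous f)
    (h : 0 ≤ ∫ θ in (0 : ℝ)..(2 * Real.pi), f (exp (θ * I))) :
    ∃ z : ℂ, z ≠ 0 ∧ 0 ≤ f z := by
  by_contra! hneg
  have hpos : 0 < ∫ θ in (0 : ℝ)..(2 * Real.pi), -f (exp (θ * I)) :=
    intervalIntegral_pos_of_pos_on (Continuous.intervalIntegrable (by fun_prop) _ _)
      (fun θ _ => neg_pos.mpr (hneg _ (exp_ne_zero _))) Real.two_pi_pos
  rw [integral_neg] at hpos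
  linarith

/-- Let `Q(z) = ∑_{j+k=2m, j,k>0} a_{jk} z^j \bar z^k` be a real-valued
homogeneous subharmonic polynomial of degree `2m` without harmonic terms (subharmonicity
expressed by the circle sub-mean value inequality).  If `Q` is not identically zero then
`Q ≥ 0` at some nonzero point, the coefficient `a_{mm}` of `|z|^{2m}` is real with
`a_{mm} ≥ 0`, and if moreover `Q(z) = c|z|^{2m}` then `c > 0`. -/
theorem stmt4 (m : ℕ) (hm : 0 < m) (a : ℕ → ℕ → ℂ)
    (hsym : ∀ j k, a k j = starRingEnd ℂ (a j k))
    (Q : ℂ → ℝ)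
    (hQ : ∀ z : ℂ, (Q z : ℂ) =
      ∑ j ∈ Finset.Ioo 0 (2 * m), a j (2 * m - j) * z ^ j * (starRingEnd ℂ z) ^ (2 * m - j))
    -- subharmonicity: circle sub-mean value inequality
    (hsub : ∀ z₀ : ℂ, ∀ r : ℝ, 0 < r →
      Q z₀ ≤ (1 / (2 * Real.pi)) *
        ∫ θ in (0:ℝ)..(2 * Real.pi), Q (z₀ + r * Complex.exp (θ * Complex.I)))
    (hne : ∃ z, Q z ≠ 0) :
    (∃ z : ℂ, z ≠ 0 ∧ 0 ≤ Q z) ∧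
    (0 ≤ (a m m).re ∧ (a m m).im = 0) ∧
    (∀ c : ℝ, (∀ z, Q z = c * ‖z‖ ^ (2 * m)) → 0 < c) := by
  have hQ0 := apply_zero_of_eq_sum hQ
  have hmean : 0 ≤ ∫ θ in (0 : ℝ)..(2 * Real.pi), Q (exp (θ * I)) := by
    have h := hsub 0 1 one_pos
    simp only [hQ0, zero_add, ofReal_one, one_mul] at h
    exact (mul_nonneg_iff_of_pos_left (by positivity)).mp h
  have hnonneg := exists_ne_zero_nonneg_of_integral_circle_nonneg (continuous_of_eq_sum hQ) hmean
  refine ⟨hnonneg, ⟨?_, ?_⟩, fun c hc => ?_⟩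
  · have hcircle := integral_circle_of_eq_sum hm hQ 1
    simp only [ofReal_one, one_mul, one_pow, mul_one] at hcircle
    rw [hcircle] at hmean
    exact (mul_nonneg_iff_of_pos_left Real.two_pi_pos).mp hmean
  · have h := congrArg im (hsym m m)
    rw [conj_im] at h
    linarith
  · obtain ⟨z, hz, hQz⟩ := hnonneg
    obtain ⟨w, hw⟩ := hne
    have hc0 : c ≠ 0 := by rintro rfl; simp [hc w] at hw
    rw [hc z] at hQz
    exact lt_of_le_of_ne (nonneg_of_mul_nonneg_left hQz (by positivity)) hc0.symm
end

section
/- Let (X, d) be a complete metric space and M : X → ℝ≥0 a locally bounded function. Then for every σ > 0 and every u ∈ X with M(u) > 0, there exists v ∈ X such that: (i) d(u,v) ≤ 2/(σ M(u)); (ii) M(v) ≥ M(u); (iii) M(x) ≤ 2 M(v) for all x with d(x,v) ≤ 1/(σ M(v)). -/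
/-- Berteloot's rescaling lemma: For a locally bounded nonnegative
function `M` on a complete metric space, any `σ > 0` and `u` with `M u > 0`, there is
`v` with `d(u,v) ≤ 2/(σ M u)`, `M v ≥ M u`, and `M x ≤ 2 M v` whenever
`d(x,v) ≤ 1/(σ M v)`. -/
theorem stmt7 {X : Type*} [MetricSpace X] [CompleteSpace X]
    (M : X → ℝ) (hM0 : ∀ x, 0 ≤ M x)
    (hloc : ∀ x : X, ∃ U ∈ nhds x, ∃ B : ℝ, ∀ y ∈ U, M y ≤ B)
    (σ : ℝ) (hσ : 0 < σ) (u : X) (hu : 0 < M u) :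
    ∃ v : X, dist u v ≤ 2 / (σ * M u) ∧ M u ≤ M v ∧
      ∀ x : X, dist x v ≤ 1 / (σ * M v) → M x ≤ 2 * M v := by
  by_contra h
  push_neg at h
  have hσMu : 0 < σ * M u := by positivity
  set Q : ℕ → X → Prop :=
    fun n v => M u * 2 ^ n ≤ M v ∧ dist u v ≤ (2 - 2 * (1/2) ^ n) / (σ * M u) with hQ
  have hstep : ∀ n : ℕ, ∀ v : X, Q n v →
      ∃ x : X, Q (n+1) x ∧ dist v x ≤ (1 / (σ * M u)) * (1/2) ^ n := by
    intro n v ⟨h1, h2⟩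
    have h2pow : (1:ℝ) ≤ 2 ^ n := by
      calc (1:ℝ) = 1 ^ n := (one_pow n).symm
        _ ≤ 2 ^ n := pow_le_pow_left₀ (by norm_num) (by norm_num) n
    have hMuv : M u ≤ M v := le_trans (le_mul_of_one_le_right hu.le h2pow) h1
    have hMv : 0 < M v := lt_of_lt_of_le hu hMuv
    have hd : dist u v ≤ 2 / (σ * M u) := by
      refine le_trans h2 ?_
      have hle : (2 - 2 * (1/2:ℝ) ^ n) ≤ 2 := by
        have : (0:ℝ) ≤ 2 * (1/2) ^ n := by positivity
        linarith
      gcongr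
    obtain ⟨x, hx1, hx2⟩ := h v hd hMuv
    have hσMv : 0 < σ * M v := by positivity
    have hkey : 1 / (σ * M v) ≤ (1 / (σ * M u)) * (1/2) ^ n := by
      have e : (1 / (σ * M u)) * ((1:ℝ)/2) ^ n = 1 / (σ * M u * 2 ^ n) := by
        rw [div_pow, one_pow, div_mul_div_comm, one_mul]
      rw [e]
      apply one_div_le_one_div_of_le (by positivity)
      rw [mul_assoc]
      exact mul_le_mul_of_nonneg_left h1 hσ.le
    refine ⟨x, ⟨?_, ?_⟩, ?_⟩
    · have : M u * 2 ^ (n+1) = 2 * (M u * 2 ^ n) := by ring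
      rw [this]
      have : 2 * (M u * 2 ^ n) ≤ 2 * M v := by linarith
      linarith [hx2]
    · calc dist u x ≤ dist u v + dist v x := dist_triangle u v x
        _ ≤ (2 - 2 * (1/2) ^ n) / (σ * M u) + (1 / (σ * M u)) * (1/2) ^ n := by
            refine add_le_add h2 ?_
            rw [dist_comm]
            exact le_trans hx1 hkey
        _ = (2 - 2 * (1/2) ^ (n+1)) / (σ * M u) := by
            field_simp
            ring
    · rw [dist_comm]
      exact le_trans hx1 hkey
  choose g hg1 hg2 using hstep
  have hQ0 : Q 0 u := by
    constructor
    · simp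
    · simp [dist_self]
  let f : ∀ n : ℕ, {v : X // Q n v} := fun n =>
    Nat.rec ⟨u, hQ0⟩ (fun n p => ⟨g n p.1 p.2, hg1 n p.1 p.2⟩) n
  set v : ℕ → X := fun n => (f n).1 with hv
  have hvQ : ∀ n, Q n (v n) := fun n => (f n).2
  have hvd : ∀ n, dist (v n) (v (n+1)) ≤ (1 / (σ * M u)) * (1/2) ^ n := by
    intro n
    exact hg2 n (f n).1 (f n).2
  have hcau : CauchySeq v :=
    cauchySeq_of_le_geometric (1/2) (1 / (σ * M u)) (by norm_num) hvd
  obtain ⟨w, hw⟩ := cauchySeq_tendsto_of_complete hcau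
  obtain ⟨U, hU, B, hB⟩ := hloc w
  have hmem : ∀ᶠ n in Filter.atTop, v n ∈ U := hw hU
  have htend : Filter.Tendsto (fun n : ℕ => M u * 2 ^ n) Filter.atTop Filter.atTop :=
    Filter.Tendsto.const_mul_atTop hu
      (tendsto_pow_atTop_atTop_of_one_lt (by norm_num : (1:ℝ) < 2))
  have hbig : ∀ᶠ n in Filter.atTop, B < M u * 2 ^ n :=
    htend.eventually (Filter.eventually_gt_atTop B)
  obtain ⟨n, hn1, hn2⟩ := (hmem.and hbig).exists
  exact absurd (le_trans (hvQ n).1 (hB _ hn1)) (not_le.mpr hn2)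
end

section
/- Let Ω ⊂ ℂ^n be a domain, B(0,r) a ball, and F : Ω ∩ B(0,r) → ℂ^n holomorphic with |dF(z)| ≤ C dist(z, ∂Ω)^{-1+1/(2m)}. Suppose a, b ∈ Ω ∩ B(0, r/2) can be joined by a smooth path γ : [0, 3s] → Ω with s = |a−b|, |γ'(t)| ≤ C, and dist(γ(t), ∂Ω) ≥ C min(t, s, 3s−t). Then |F(a) − F(b)| ≤ C' s^{1/(2m)} for a constant C' depending only on C and m. (Hölder-1/(2m) continuity along such paths.) -/
open MeasureTheory Set

/-!
With `α = 1/(2m)`, the lower bound on `dist(γ t, ∂Ω)` and `α - 1 ≤ 0` give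
`‖(F ∘ γ)'(t)‖ ≤ ‖dF(γ t)‖ ‖γ'(t)‖ ≲ min(t, s, 3s - t)^{α-1} ≤ t^{α-1} + s^{α-1} + (3s - t)^{α-1}`.
Since `α - 1 > -1` the right-hand side is integrable on `[0, 3s]`, with integral
`(2·3^α/α + 3) s^α`, and the fundamental theorem of calculus bounds `|F b - F a|` by it.
-/

section

variable {E : Type*} [NormedAddCommGroup E] [NormedSpace ℝ E] [CompleteSpace E]

theorem norm_sub_le_integral_of_norm_deriv_le {f : ℝ → E} {ψ : ℝ → ℝ} {a b : ℝ} (hab : a ≤ b)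
    (hcont : ContinuousOn f (Icc a b)) (hdiff : ∀ t ∈ Ioo a b, DifferentiableAt ℝ f t)
    (hbound : ∀ t ∈ Ioo a b, ‖deriv f t‖ ≤ ψ t) (hψ : IntervalIntegrable ψ volume a b) :
    ‖f b - f a‖ ≤ ∫ t in a..b, ψ t := by
  have hbound_ae : ∀ᵐ t ∂volume.restrict (Ioc a b), ‖deriv f t‖ ≤ ψ t := by
    rw [← Measure.restrict_congr_set Ioo_ae_eq_Ioc]
    exact (ae_restrict_iff' measurableSet_Ioo).2 (.of_forall hbound)
  have hint : IntervalIntegrable (deriv f) volume a b := by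
    refine hψ.mono_fun (aestronglyMeasurable_deriv f _) ?_
    rw [uIoc_of_le hab]
    exact hbound_ae.mono fun t ht => ht.trans (le_abs_self _)
  rw [← intervalIntegral.integral_eq_sub_of_hasDerivAt_of_le hab hcont
    (fun t ht => (hdiff t ht).hasDerivAt) hint]
  exact intervalIntegral.norm_integral_le_of_norm_le hab
    ((ae_restrict_iff' measurableSet_Ioc).1 hbound_ae) hψ

end

theorem rpow_min_min_le_add_add {x y z β : ℝ} (hx : 0 ≤ x) (hy : 0 ≤ y) (hz : 0 ≤ z) :
    min x (min y z) ^ β ≤ x ^ β + y ^ β + z ^ β := by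
  have := Real.rpow_nonneg hx β
  have := Real.rpow_nonneg hy β
  have := Real.rpow_nonneg hz β
  rcases min_choice x (min y z) with h | h <;> rw [h]
  · linarith
  rcases min_choice y z with h' | h' <;> rw [h'] <;> linarith

theorem intervalIntegrable_sub_rpow {β T : ℝ} (hβ : -1 < β) :
    IntervalIntegrable (fun t : ℝ => (T - t) ^ β) volume 0 T := by
  simpa using
    ((intervalIntegral.intervalIntegrable_rpow' (a := 0) (b := T) hβ).comp_sub_left T).symm

theorem intervalIntegrable_rpow_add_const_add_rpow_sub {α c T : ℝ} (hα : 0 < α) :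
    IntervalIntegrable (fun t : ℝ => t ^ (α - 1) + c + (T - t) ^ (α - 1)) volume 0 T :=
  ((intervalIntegral.intervalIntegrable_rpow' (by linarith)).add intervalIntegrable_const).add
    (intervalIntegrable_sub_rpow (by linarith))

theorem integral_rpow_add_const_add_rpow_sub {α c T : ℝ} (hα : 0 < α) :
    ∫ t in (0 : ℝ)..T, (t ^ (α - 1) + c + (T - t) ^ (α - 1)) = 2 * T ^ α / α + T * c := by
  have hexp : -1 < α - 1 := by linarith
  have hpow : ∫ t in (0 : ℝ)..T, t ^ (α - 1) = T ^ α / α := by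
    rw [integral_rpow (.inl hexp), sub_add_cancel, Real.zero_rpow hα.ne', sub_zero]
  have hpow_sub : ∫ t in (0 : ℝ)..T, (T - t) ^ (α - 1) = T ^ α / α := by
    rw [intervalIntegral.integral_comp_sub_left (fun u : ℝ => u ^ (α - 1)) T]
    simpa using hpow
  have hint := intervalIntegral.intervalIntegrable_rpow' (a := 0) (b := T) hexp
  rw [intervalIntegral.integral_add (hint.add intervalIntegrable_const)
      (intervalIntegrable_sub_rpow hexp),
    intervalIntegral.integral_add hint intervalIntegrable_const, hpow, hpow_sub,
    intervalIntegral.integral_const, smul_eq_mul, sub_zero]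
  ring

section

variable {E : Type*} [NormedAddCommGroup E] [NormedSpace ℝ E] [CompleteSpace E]

theorem norm_sub_le_of_norm_deriv_le_rpow_min {f : ℝ → E} {α K s T : ℝ} (hα : 0 < α)
    (hK : 0 ≤ K) (hs : 0 < s) (hT : 0 ≤ T) (hcont : ContinuousOn f (Icc 0 T))
    (hdiff : ∀ t ∈ Ioo 0 T, DifferentiableAt ℝ f t)
    (hbound : ∀ t ∈ Ioo 0 T, ‖deriv f t‖ ≤ K * min t (min s (T - t)) ^ (α - 1)) :
    ‖f T - f 0‖ ≤ K * (2 * T ^ α / α + T * s ^ (α - 1)) := by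
  rw [← integral_rpow_add_const_add_rpow_sub hα, ← intervalIntegral.integral_const_mul]
  refine norm_sub_le_integral_of_norm_deriv_le hT hcont hdiff (fun t ht => ?_)
    ((intervalIntegrable_rpow_add_const_add_rpow_sub hα).const_mul K)
  refine (hbound t ht).trans (mul_le_mul_of_nonneg_left ?_ hK)
  exact rpow_min_min_le_add_add ht.1.le hs.le (sub_nonneg.2 ht.2.le)

end

section

variable {E G : Type*} [NormedAddCommGroup E] [NormedSpace ℂ E] [NormedAddCommGroup G]
  [NormedSpace ℂ G]

theorem hasDerivAt_comp_of_differentiableOn {U : Set E} {F : E → G} {γ : ℝ → E}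
    {a b t : ℝ} (hF : DifferentiableOn ℂ F U) (hU : IsOpen U) (hγ : ContDiffOn ℝ 1 γ (Icc a b))
    (hmaps : MapsTo γ (Icc a b) U) (ht : t ∈ Ioo a b) :
    HasDerivAt (F ∘ γ) (fderiv ℂ F (γ t) (deriv γ t)) t :=
  ((hF.differentiableAt (hU.mem_nhds (hmaps (Ioo_subset_Icc_self ht)))).hasFDerivAt
    |>.restrictScalars ℝ).comp_hasDerivAt t
    ((hγ.differentiableOn one_ne_zero t (Ioo_subset_Icc_self ht)).differentiableAt
      (Icc_mem_nhds ht.1 ht.2)).hasDerivAt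

theorem ContinuousLinearMap.norm_apply_le_of_norm_le_rpow {L : E →L[ℂ] G} {v : E} {C d μ α : ℝ}
    (hC : 0 < C) (hμ : 0 < μ) (hα : α ≤ 1) (hL : ‖L‖ ≤ C * d ^ (α - 1)) (hv : ‖v‖ ≤ C)
    (hd : C * μ ≤ d) : ‖L v‖ ≤ C ^ 2 * C ^ (α - 1) * μ ^ (α - 1) :=
  calc ‖L v‖ ≤ ‖L‖ * ‖v‖ := L.le_opNorm v
    _ ≤ C * (C * μ) ^ (α - 1) * C := by
        gcongr
        exact hL.trans (mul_le_mul_of_nonneg_left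
          (Real.rpow_le_rpow_of_nonpos (mul_pos hC hμ) hd (sub_nonpos.2 hα)) hC.le)
    _ = C ^ 2 * C ^ (α - 1) * μ ^ (α - 1) := by rw [Real.mul_rpow hC.le hμ.le]; ring

end

theorem stmt11_general {n : ℕ} (Ω : Set (EuclideanSpace ℂ (Fin n))) (hΩ : IsOpen Ω)
    (r : ℝ) (m : ℕ) (hm : 1 ≤ m)
    (F : EuclideanSpace ℂ (Fin n) → EuclideanSpace ℂ (Fin n))
    (hF : DifferentiableOn ℂ F (Ω ∩ Metric.ball 0 r))
    (C : ℝ) (hC : 0 < C)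
    (hdF : ∀ z ∈ Ω ∩ Metric.ball (0 : EuclideanSpace ℂ (Fin n)) r,
      ‖fderiv ℂ F z‖ ≤ C * Metric.infDist z Ωᶜ ^ (-1 + 1 / (2 * (m : ℝ)))) :
    ∃ C' : ℝ, 0 < C' ∧
      ∀ a b : EuclideanSpace ℂ (Fin n),
        a ∈ Ω ∩ Metric.ball 0 (r / 2) → b ∈ Ω ∩ Metric.ball 0 (r / 2) →
        ∀ γ : ℝ → EuclideanSpace ℂ (Fin n),
          ContDiffOn ℝ 1 γ (Set.Icc 0 (3 * dist a b)) →
          γ 0 = a → γ (3 * dist a b) = b →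
          Set.MapsTo γ (Set.Icc 0 (3 * dist a b)) (Ω ∩ Metric.ball 0 r) →
          (∀ t ∈ Set.Icc (0:ℝ) (3 * dist a b), ‖deriv γ t‖ ≤ C) →
          (∀ t ∈ Set.Icc (0:ℝ) (3 * dist a b),
            C * min t (min (dist a b) (3 * dist a b - t)) ≤ Metric.infDist (γ t) Ωᶜ) →
          dist (F a) (F b) ≤ C' * dist a b ^ (1 / (2 * (m : ℝ))) := by
  set α : ℝ := 1 / (2 * (m : ℝ))
  have hm' : (1 : ℝ) ≤ m := mod_cast hm
  have hα : 0 < α := by positivity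
  have hα1 : α ≤ 1 := by rw [div_le_one (by positivity)]; linarith
  refine ⟨C ^ 2 * C ^ (α - 1) * (2 * 3 ^ α / α + 3), by positivity, ?_⟩
  intro a b _ _ γ hγ hγ0 hγ1 hmaps hγ' hdist
  rcases (dist_nonneg : 0 ≤ dist a b).eq_or_lt with hs | hs
  · rw [← hs, dist_eq_zero.1 hs.symm, dist_self, Real.zero_rpow hα.ne', mul_zero]
  set s := dist a b
  clear_value s
  have hchain := fun t (ht : t ∈ Ioo 0 (3 * s)) =>
    hasDerivAt_comp_of_differentiableOn hF (hΩ.inter Metric.isOpen_ball) hγ hmaps ht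
  have hbound : ∀ t ∈ Ioo 0 (3 * s),
      ‖deriv (F ∘ γ) t‖ ≤ C ^ 2 * C ^ (α - 1) * min t (min s (3 * s - t)) ^ (α - 1) := by
    intro t ht
    rw [(hchain t ht).deriv]
    refine ContinuousLinearMap.norm_apply_le_of_norm_le_rpow hC
      (lt_min ht.1 (lt_min hs (sub_pos.2 ht.2))) hα1 ?_ (hγ' t (Ioo_subset_Icc_self ht))
      (hdist t (Ioo_subset_Icc_self ht))
    simpa only [neg_add_eq_sub] using hdF _ (hmaps (Ioo_subset_Icc_self ht))
  have hholder := norm_sub_le_of_norm_deriv_le_rpow_min hα (by positivity) hs (by positivity)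
    (hF.continuousOn.comp hγ.continuousOn hmaps) (fun t ht => (hchain t ht).differentiableAt)
    hbound
  rw [Function.comp_apply, Function.comp_apply, hγ0, hγ1, ← dist_eq_norm'] at hholder
  calc dist (F a) (F b) ≤ C ^ 2 * C ^ (α - 1) * (2 * (3 * s) ^ α / α + 3 * s * s ^ (α - 1)) :=
        hholder
    _ = C ^ 2 * C ^ (α - 1) * (2 * 3 ^ α / α + 3) * s ^ α := by
        rw [Real.mul_rpow (by norm_num) hs.le, Real.rpow_sub_one hs.ne']
        field_simp

/-- Hölder-`1/(2m)` continuity along good paths.  If `F` is holomorphic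
on `Ω ∩ B(0,r)` with `‖dF(z)‖ ≤ C dist(z,∂Ω)^{-1+1/(2m)}`, then there is `C' > 0`
(depending only on `C` and `m`) such that whenever `a, b ∈ Ω ∩ B(0,r/2)` are joined by
a `C¹` path `γ : [0,3s] → Ω ∩ B(0,r)` (`s = |a-b|`) with `‖γ'‖ ≤ C` and
`dist(γ(t),∂Ω) ≥ C·min(t,s,3s−t)`, one has `|F a − F b| ≤ C' s^{1/(2m)}`. -/
theorem stmt11 {n : ℕ} (Ω : Set (EuclideanSpace ℂ (Fin n))) (hΩ : IsOpen Ω)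
    (r : ℝ) (hr : 0 < r) (m : ℕ) (hm : 1 ≤ m)
    (F : EuclideanSpace ℂ (Fin n) → EuclideanSpace ℂ (Fin n))
    (hF : DifferentiableOn ℂ F (Ω ∩ Metric.ball 0 r))
    (C : ℝ) (hC : 0 < C)
    (hdF : ∀ z ∈ Ω ∩ Metric.ball (0 : EuclideanSpace ℂ (Fin n)) r,
      ‖fderiv ℂ F z‖ ≤ C * Metric.infDist z Ωᶜ ^ (-1 + 1 / (2 * (m : ℝ)))) :
    ∃ C' : ℝ, 0 < C' ∧
      ∀ a b : EuclideanSpace ℂ (Fin n),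
        a ∈ Ω ∩ Metric.ball 0 (r / 2) → b ∈ Ω ∩ Metric.ball 0 (r / 2) →
        ∀ γ : ℝ → EuclideanSpace ℂ (Fin n),
          ContDiffOn ℝ 1 γ (Set.Icc 0 (3 * dist a b)) →
          γ 0 = a → γ (3 * dist a b) = b →
          Set.MapsTo γ (Set.Icc 0 (3 * dist a b)) (Ω ∩ Metric.ball 0 r) →
          (∀ t ∈ Set.Icc (0:ℝ) (3 * dist a b), ‖deriv γ t‖ ≤ C) →
          (∀ t ∈ Set.Icc (0:ℝ) (3 * dist a b),
            C * min t (min (dist a b) (3 * dist a b - t)) ≤ Metric.infDist (γ t) Ωᶜ) →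
          dist (F a) (F b) ≤ C' * dist a b ^ (1 / (2 * (m : ℝ))) :=
  stmt11_general Ω hΩ r m hm F hF C hC hdF
end
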